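/- arXiv:2401.04667 — 3 statements merged into one kernel-verified Lean document; each statement's English description precedes it below -/
import Mathlib

section
/- For all complex numbers x = x₁ + i x₂ and y = y₁ + i y₂, one has |exp(x+y) - exp(y)| ≤ √2 · |x| · (exp(x₁ + y₁) + exp(y₁)). -/
lemma key_exp_sub_one (x : ℂ) :
    ‖Complex.exp x - 1‖ ≤ ‖x‖ * (Real.exp x.re + 1) := by
  have hderiv : ∀ t ∈ Set.Icc (0:ℝ) 1,
      HasDerivWithinAt (fun t : ℝ => Complex.exp ((t : ℂ) * x))
        (Complex.exp ((t : ℂ) * x) * x) (Set.Icc 0 1) t := by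
    intro t _
    have h1 : HasDerivAt (fun t : ℝ => (t : ℂ) * x) x t := by
      simpa using ((Complex.ofRealCLM.hasDerivAt (x := t)).mul_const x)
    exact (h1.cexp).hasDerivWithinAt
  have hbound : ∀ t ∈ Set.Icc (0:ℝ) 1,
      ‖Complex.exp ((t : ℂ) * x) * x‖ ≤ (Real.exp x.re + 1) * ‖x‖ := by
    intro t ht
    rw [norm_mul, Complex.norm_exp]
    gcongr
    have hre : ((t : ℂ) * x).re = t * x.re := by simp
    rw [hre]
    rcases le_total x.re 0 with h | h
    · have : t * x.re ≤ 0 := mul_nonpos_of_nonneg_of_nonpos ht.1 h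
      have := Real.exp_le_one_iff.mpr this
      nlinarith [Real.exp_pos x.re]
    · have : t * x.re ≤ x.re := by nlinarith [ht.1, ht.2]
      have := Real.exp_le_exp.mpr this
      nlinarith [Real.exp_pos x.re]
  have := (convex_Icc (0:ℝ) 1).norm_image_sub_le_of_norm_hasDerivWithin_le
    hderiv hbound (Set.left_mem_Icc.2 zero_le_one) (Set.right_mem_Icc.2 zero_le_one)
  simpa [mul_comm] using this

theorem stmt_0 (x y : ℂ) :
    ‖Complex.exp (x + y) - Complex.exp y‖ ≤
      Real.sqrt 2 * ‖x‖ * (Real.exp (x.re + y.re) + Real.exp y.re) := by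
  have hfac : Complex.exp (x + y) - Complex.exp y
      = Complex.exp y * (Complex.exp x - 1) := by
    rw [mul_sub, mul_one, ← Complex.exp_add]; ring_nf
  have h1 : ‖Complex.exp (x + y) - Complex.exp y‖
      ≤ Real.exp y.re * (‖x‖ * (Real.exp x.re + 1)) := by
    rw [hfac, norm_mul, Complex.norm_exp]
    exact mul_le_mul_of_nonneg_left (key_exp_sub_one x) (Real.exp_pos _).le
  have h2 : Real.exp y.re * (‖x‖ * (Real.exp x.re + 1))
      = ‖x‖ * (Real.exp (x.re + y.re) + Real.exp y.re) := by
    rw [Real.exp_add]; ring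
  have hsqrt : (1:ℝ) ≤ Real.sqrt 2 := by
    rw [show (1:ℝ) = Real.sqrt 1 from (Real.sqrt_one).symm]
    exact Real.sqrt_le_sqrt (by norm_num)
  calc ‖Complex.exp (x + y) - Complex.exp y‖
      ≤ ‖x‖ * (Real.exp (x.re + y.re) + Real.exp y.re) := by rw [← h2]; exact h1
    _ ≤ Real.sqrt 2 * ‖x‖ * (Real.exp (x.re + y.re) + Real.exp y.re) := by
        have hx : 0 ≤ ‖x‖ := norm_nonneg _
        have he : (0:ℝ) < Real.exp (x.re + y.re) + Real.exp y.re :=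
          add_pos (Real.exp_pos _) (Real.exp_pos _)
        nlinarith [mul_nonneg hx he.le]
end

section
/- Let π be a probability density on ℝ, φ' : ℝ → ℝ continuous with |φ'(x)| ≤ c(1 + |x|), and suppose π' = −φ'·π, with φ ∈ C^∞ having all derivatives φ^{(k+1)} for 1 ≤ k ≤ J bounded by c(1+|x|). Then for every 0 ≤ n ≤ J there exists a constant c_n such that |π^{(n)}(x)| ≤ c_n (1 + |x|)^n π(x) for all x ∈ ℝ. -/
theorem stmt_12 (π φ : ℝ → ℝ) (J : ℕ) (c : ℝ)
    (hπ_smooth : ContDiff ℝ (⊤ : ℕ∞) π) (hφ_smooth : ContDiff ℝ (⊤ : ℕ∞) φ)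
    (hπ_nonneg : ∀ x, 0 ≤ π x) (hπ_prob : ∫ x, π x = 1)
    (hODE : ∀ x, deriv π x = -(deriv φ x * π x))
    (hφ' : ∀ x, |deriv φ x| ≤ c * (1 + |x|))
    (hφ_derivs : ∀ k, 1 ≤ k → k ≤ J →
      ∀ x, |iteratedDeriv (k + 1) φ x| ≤ c * (1 + |x|)) :
    ∀ n, n ≤ J → ∃ c_n : ℝ,
      ∀ x, |iteratedDeriv n π x| ≤ c_n * (1 + |x|) ^ n * π x := by
  have hc : 0 ≤ c := by
    have := hφ' 0
    have h0 : (0:ℝ) ≤ |deriv φ 0| := abs_nonneg _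
    simp at this
    linarith
  have hφd : ContDiff ℝ (⊤ : ℕ∞) (deriv φ) := by
    have := ContDiff.iterate_deriv 1 (hφ_smooth.of_le (by simp))
    simpa using this
  -- strong statement
  have key : ∀ n, n ≤ J → ∃ C : ℝ, 0 ≤ C ∧ ∀ k, k ≤ n →
      ∀ x, |iteratedDeriv k π x| ≤ C * (1 + |x|) ^ k * π x := by
    intro n
    induction n with
    | zero =>
      intro _
      refine ⟨1, zero_le_one, ?_⟩
      intro k hk x
      interval_cases k
      simp only [iteratedDeriv_zero, pow_zero, one_mul]
      rw [abs_of_nonneg (hπ_nonneg x)]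
    | succ n ih =>
      intro hnJ
      obtain ⟨C, hC0, hC⟩ := ih (le_trans (Nat.le_succ n) hnJ)
      refine ⟨max C ((2:ℝ)^n * c * C), le_max_of_le_left hC0, ?_⟩
      intro k hk x
      have h1x : (1:ℝ) ≤ 1 + |x| := by have := abs_nonneg x; linarith
      have h1x0 : (0:ℝ) < 1 + |x| := lt_of_lt_of_le one_pos h1x
      rcases Nat.lt_succ_iff_lt_or_eq.mp (Nat.lt_succ_of_le hk) with h | h
      · have := hC k (Nat.lt_succ_iff.mp h) x
        calc |iteratedDeriv k π x| ≤ C * (1 + |x|) ^ k * π x := this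
          _ ≤ max C ((2:ℝ)^n * c * C) * (1 + |x|) ^ k * π x := by
              apply mul_le_mul_of_nonneg_right _ (hπ_nonneg x)
              exact mul_le_mul_of_nonneg_right (le_max_left _ _)
                (pow_nonneg (le_of_lt h1x0) _)
      · subst h
        -- π^{(n+1)} = iteratedDeriv n (deriv π) = - iteratedDeriv n (φ' * π)
        have e1 : iteratedDeriv (n+1) π x = -(iteratedDeriv n (fun y => deriv φ y * π y) x) := by
          rw [iteratedDeriv_succ']
          have : deriv π = fun y => -(deriv φ y * π y) := funext hODE
          rw [this]
          have := iteratedDeriv_neg n (fun y => deriv φ y * π y) x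
          simpa using this
        rw [e1, abs_neg]
        -- Leibniz bound
        have hmul := norm_iteratedFDeriv_mul_le (𝕜 := ℝ)
          hφd (hπ_smooth.of_le (by simp)) x (n := n) (by exact_mod_cast le_top : (n : WithTop ℕ∞) ≤ (⊤ : ℕ∞))
        rw [norm_iteratedFDeriv_eq_norm_iteratedDeriv] at hmul
        have hterm : ∀ i ∈ Finset.range (n+1),
            (n.choose i : ℝ) * ‖iteratedFDeriv ℝ i (deriv φ) x‖ *
              ‖iteratedFDeriv ℝ (n-i) π x‖ ≤
            (n.choose i : ℝ) * (c * (1 + |x|)) * (C * (1 + |x|)^n * π x) := by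
          intro i hi
          rw [Finset.mem_range, Nat.lt_succ_iff] at hi
          rw [norm_iteratedFDeriv_eq_norm_iteratedDeriv,
            norm_iteratedFDeriv_eq_norm_iteratedDeriv]
          have hφi : ‖iteratedDeriv i (deriv φ) x‖ ≤ c * (1 + |x|) := by
            rw [Real.norm_eq_abs, ← iteratedDeriv_succ']
            rcases Nat.eq_zero_or_pos i with h0 | h0
            · subst h0; simpa [iteratedDeriv_one] using hφ' x
            · exact hφ_derivs i h0 (le_trans hi (Nat.le_of_succ_le hnJ)) x
          have hπi : ‖iteratedDeriv (n-i) π x‖ ≤ C * (1 + |x|)^n * π x := by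
            rw [Real.norm_eq_abs]
            refine le_trans (hC (n-i) (Nat.sub_le n i) x) ?_
            apply mul_le_mul_of_nonneg_right _ (hπ_nonneg x)
            exact mul_le_mul_of_nonneg_left
              (pow_le_pow_right₀ h1x (Nat.sub_le n i)) hC0
          have h1 : (0:ℝ) ≤ (n.choose i : ℝ) := Nat.cast_nonneg _
          have h2 : (0:ℝ) ≤ ‖iteratedDeriv (n-i) π x‖ := norm_nonneg _
          have h3 : (0:ℝ) ≤ c * (1 + |x|) :=
            mul_nonneg hc (le_of_lt h1x0)
          exact mul_le_mul (mul_le_mul_of_nonneg_left hφi h1) hπi h2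
            (mul_nonneg h1 h3)
        have hsum : ∑ i ∈ Finset.range (n+1), (n.choose i : ℝ) *
              ‖iteratedFDeriv ℝ i (deriv φ) x‖ * ‖iteratedFDeriv ℝ (n-i) π x‖ ≤
            (2:ℝ)^n * ((c * (1 + |x|)) * (C * (1 + |x|)^n * π x)) := by
          have hbin : ∑ i ∈ Finset.range (n+1), (n.choose i : ℝ) = (2:ℝ)^n := by
            norm_cast
            exact Nat.sum_range_choose n
          calc ∑ i ∈ Finset.range (n+1), (n.choose i : ℝ) *
                ‖iteratedFDeriv ℝ i (deriv φ) x‖ * ‖iteratedFDeriv ℝ (n-i) π x‖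
              ≤ ∑ i ∈ Finset.range (n+1), (n.choose i : ℝ) * (c * (1 + |x|)) *
                (C * (1 + |x|)^n * π x) := Finset.sum_le_sum hterm
            _ = (∑ i ∈ Finset.range (n+1), (n.choose i : ℝ)) *
                ((c * (1 + |x|)) * (C * (1 + |x|)^n * π x)) := by
                rw [Finset.sum_mul]
                exact Finset.sum_congr rfl (fun i _ => by ring)
            _ = (2:ℝ)^n * ((c * (1 + |x|)) * (C * (1 + |x|)^n * π x)) := by rw [hbin]
        have : |iteratedDeriv n (fun y => deriv φ y * π y) x| ≤
            (2:ℝ)^n * c * C * (1 + |x|)^(n+1) * π x := by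
          rw [← Real.norm_eq_abs]
          refine le_trans hmul (le_trans hsum (le_of_eq ?_))
          ring
        refine le_trans this ?_
        apply mul_le_mul_of_nonneg_right _ (hπ_nonneg x)
        exact mul_le_mul_of_nonneg_right (le_max_right _ _)
          (pow_nonneg (le_of_lt h1x0) _)
  intro n hn
  obtain ⟨C, _, hC⟩ := key n hn
  exact ⟨C, hC n le_rfl⟩
end

section
/- Let f : ℝ → ℝ be such that f and its derivatives up to order J+2 are integrable, f is C^∞ on ℝ \ {0}, f^{(j)}(x) → 0 as |x| → ∞ for all j ≤ J+1, and the one-sided limits f^{(J+1)}(0⁺) ≠ f^{(J+1)}(0⁻) exist and differ. Then the Fourier transform satisfies |F(f)(z)| ≥ c/|z|^{J+2} for all sufficiently large real z, for some c > 0. -/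
open MeasureTheory Filter Set Complex FourierTransform Real



-- L1: right limit existence
lemma aux_right_limit (h h' : ℝ → ℂ)
    (hderiv : ∀ x ∈ Ioi (0:ℝ), HasDerivAt h (h' x) x)
    (hint : IntegrableOn h' (Ioc 0 1)) :
    ∃ L, Tendsto h (nhdsWithin 0 (Ioi 0)) (nhds L) := by
  refine ⟨h 1 - ∫ t in (0:ℝ)..1, h' t, ?_⟩
  have hIcc : IntegrableOn h' (Icc 0 1) := by
    rwa [integrableOn_Icc_iff_integrableOn_Ioc]
  have hcont : ContinuousOn (fun x => ∫ t in Ioc (0:ℝ) x, h' t) (Icc 0 1) :=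
    intervalIntegral.continuousOn_primitive hIcc
  have hΦ : Tendsto (fun x => ∫ t in (0:ℝ)..x, h' t) (nhdsWithin 0 (Ioi 0)) (nhds 0) := by
    have h0 : ContinuousWithinAt (fun x => ∫ t in Ioc (0:ℝ) x, h' t) (Icc 0 1) 0 :=
      hcont 0 (by constructor <;> norm_num)
    have : Tendsto (fun x => ∫ t in Ioc (0:ℝ) x, h' t) (nhdsWithin 0 (Ioc 0 1)) (nhds 0) := by
      have := h0.tendsto
      simp only [Ioc_eq_empty (lt_irrefl (0:ℝ)), Measure.restrict_empty, integral_zero_measure] at this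
      exact this.mono_left (nhdsWithin_mono _ Ioc_subset_Icc_self)
    rw [← nhdsWithin_Ioc_eq_nhdsGT (zero_lt_one (α := ℝ))]
    apply this.congr'
    filter_upwards [self_mem_nhdsWithin] with x hx
    rw [intervalIntegral.integral_of_le hx.1.le]
  have heq : ∀ᶠ x in nhdsWithin 0 (Ioi 0),
      h 1 - (∫ t in (0:ℝ)..1, h' t) + (∫ t in (0:ℝ)..x, h' t) = h x := by
    rw [← nhdsWithin_Ioc_eq_nhdsGT (zero_lt_one (α := ℝ))]
    filter_upwards [self_mem_nhdsWithin] with x hx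
    have hftc : ∫ t in x..1, h' t = h 1 - h x := by
      apply intervalIntegral.integral_eq_sub_of_hasDerivAt
      · intro y hy
        rw [uIcc_of_le hx.2] at hy
        exact hderiv y (lt_of_lt_of_le hx.1 hy.1)
      · rw [intervalIntegrable_iff_integrableOn_Ioc_of_le hx.2]
        exact hint.mono (Ioc_subset_Ioc_left hx.1.le) le_rfl
    have hsub : (∫ t in (0:ℝ)..1, h' t) - (∫ t in (0:ℝ)..x, h' t) = ∫ t in x..1, h' t := by
      apply intervalIntegral.integral_interval_sub_left
      · rw [intervalIntegrable_iff_integrableOn_Ioc_of_le zero_le_one]; exact hint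
      · rw [intervalIntegrable_iff_integrableOn_Ioc_of_le hx.1.le]
        exact hint.mono (Ioc_subset_Ioc_right hx.2) le_rfl
    have := hsub.trans hftc
    linear_combination (norm := ring_nf) -this
  have := (tendsto_const_nhds (x := h 1 - ∫ t in (0:ℝ)..1, h' t)
    (f := nhdsWithin (0:ℝ) (Ioi 0))).add hΦ
  rw [add_zero] at this
  exact this.congr' heq

lemma aux_neg_tendsto : Tendsto (fun x : ℝ => -x) (nhdsWithin 0 (Iio 0)) (nhdsWithin 0 (Ioi 0)) := by
  apply tendsto_nhdsWithin_of_tendsto_nhds_of_eventually_within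
  · simpa using (continuous_neg.tendsto (0:ℝ)).mono_left (nhdsWithin_le_nhds)
  · filter_upwards [self_mem_nhdsWithin] with x hx
    simpa using hx

lemma aux_left_limit (h h' : ℝ → ℂ)
    (hderiv : ∀ x ∈ Iio (0:ℝ), HasDerivAt h (h' x) x)
    (hint : Integrable h') :
    ∃ L, Tendsto h (nhdsWithin 0 (Iio 0)) (nhds L) := by
  obtain ⟨L, hL⟩ := aux_right_limit (fun x => h (-x)) (fun x => -h' (-x))
    (fun x hx => by
      have h1 : HasDerivAt h (h' (-x)) (-x) := hderiv (-x) (by simpa using hx.out)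
      have h2 : HasDerivAt (fun y : ℝ => -y) (-1) x := hasDerivAt_neg x
      have := HasDerivAt.scomp (𝕜 := ℝ) (𝕜' := ℝ) x h1 h2
      simpa [Function.comp_def] using this)
    (hint.comp_neg.neg.integrableOn)
  refine ⟨L, ?_⟩
  have : (fun x : ℝ => h (- (-x))) = h := by funext x; rw [neg_neg]
  have := hL.comp aux_neg_tendsto
  simpa [Function.comp_def] using this


-- Riemann-Lebesgue in our normalization
lemma aux_RL (G : ℝ → ℂ) :
    Tendsto (fun z : ℝ => ∫ x : ℝ, Complex.exp (Complex.I * z * x) * G x)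
      (cocompact ℝ) (nhds 0) := by
  have hφ : Tendsto (fun z : ℝ => -z / (2 * π)) (cocompact ℝ) (cocompact ℝ) := by
    rw [cocompact_eq_atBot_atTop, tendsto_sup]
    constructor
    · apply Tendsto.mono_right _ le_sup_right
      apply Tendsto.atTop_div_const (by positivity)
      exact tendsto_neg_atBot_atTop
    · apply Tendsto.mono_right _ le_sup_left
      apply Tendsto.atBot_div_const (by positivity)
      exact tendsto_neg_atTop_atBot
  have := (Real.zero_at_infty_fourier G).comp hφ
  apply this.congr
  intro z
  rw [Function.comp_apply, Real.fourier_real_eq_integral_exp_smul]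
  congr 1
  funext v
  rw [smul_eq_mul]
  congr 1
  congr 1
  push_cast
  have hπ : (π:ℂ) ≠ 0 := by exact_mod_cast Real.pi_ne_zero
  field_simp


lemma aux_norm_exp (z x : ℝ) : ‖Complex.exp (Complex.I * z * x)‖ = 1 := by
  rw [Complex.norm_exp]
  simp [Complex.mul_re]

lemma aux_exp_deriv (z : ℝ) (x : ℝ) :
    HasDerivAt (fun t : ℝ => Complex.exp (Complex.I * z * t))
      (Complex.I * z * Complex.exp (Complex.I * z * x)) x := by
  have h1 : HasDerivAt (fun t : ℝ => (Complex.I * z) * t) (Complex.I * z) x := by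
    simpa using (Complex.ofRealCLM.hasDerivAt (x := x)).const_mul (Complex.I * z)
  simpa [mul_comm] using h1.cexp

lemma aux_integrable_exp_mul (z : ℝ) {u : ℝ → ℂ} (hu : Integrable u) :
    Integrable (fun x : ℝ => Complex.exp (Complex.I * z * x) * u x) := by
  apply hu.bdd_mul (c := 1)
  · exact (Complex.continuous_exp.comp (by continuity)).aestronglyMeasurable
  · exact Filter.Eventually.of_forall fun x => le_of_eq (aux_norm_exp z x)

lemma aux_tendsto_zero_exp_mul (z : ℝ) {u : ℝ → ℂ}
    (hu : Tendsto u (cocompact ℝ) (nhds 0)) (l : Filter ℝ) (hl : l ≤ cocompact ℝ) :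
    Tendsto (fun x : ℝ => Complex.exp (Complex.I * z * x) * u x) l (nhds 0) := by
  exact squeeze_zero_norm (fun x => by rw [norm_mul, aux_norm_exp, one_mul])
    (tendsto_zero_iff_norm_tendsto_zero.mp (hu.mono_left hl))

lemma aux_tendsto_exp_mul_zero (z : ℝ) {u : ℝ → ℂ} {L : ℂ} {s : Set ℝ}
    (hlim : Tendsto u (nhdsWithin 0 s) (nhds L)) :
    Tendsto (fun x : ℝ => Complex.exp (Complex.I * z * x) * u x)
      (nhdsWithin 0 s) (nhds L) := by
  have h1 : Tendsto (fun x : ℝ => Complex.exp (Complex.I * z * x))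
      (nhdsWithin 0 s) (nhds 1) := by
    apply Tendsto.mono_left _ nhdsWithin_le_nhds
    have hc : Continuous (fun x : ℝ => Complex.exp (Complex.I * z * x)) :=
      Complex.continuous_exp.comp (by continuity)
    simpa using hc.tendsto 0
  simpa using h1.mul hlim

-- integration by parts on (0,∞)
lemma aux_ibp_Ioi (z : ℝ) (u u' : ℝ → ℂ) (L : ℂ)
    (hderiv : ∀ x ∈ Ioi (0:ℝ), HasDerivAt u (u' x) x)
    (hu : Integrable u) (hu' : Integrable u')
    (hlim : Tendsto u (nhdsWithin 0 (Ioi 0)) (nhds L))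
    (hdec : Tendsto u (cocompact ℝ) (nhds 0)) :
    ∫ x in Ioi (0:ℝ), Complex.exp (Complex.I * z * x) * u' x
      = -L - Complex.I * z * ∫ x in Ioi (0:ℝ), Complex.exp (Complex.I * z * x) * u x := by
  set H : ℝ → ℂ := fun x => if 0 < x then Complex.exp (Complex.I * z * x) * u x else L
    with hH
  have hHeqIoi : ∀ x ∈ Ioi (0:ℝ), H x = Complex.exp (Complex.I * z * x) * u x := by
    intro x hx; rw [hH]; simp only [if_pos hx.out]
  have h0 : H 0 = L := by rw [hH]; simp
  have h1 : Integrable (fun x : ℝ => (Complex.I * z) • (Complex.exp (Complex.I * z * x) * u x)) :=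
    ((aux_integrable_exp_mul z hu).smul (Complex.I * z)).congr (by filter_upwards with x; rfl)
  have h2 := aux_integrable_exp_mul z hu'
  have hptwise : ∀ x : ℝ, (Complex.I * z) • (Complex.exp (Complex.I * z * x) * u x)
      + Complex.exp (Complex.I * z * x) * u' x
      = Complex.I * z * Complex.exp (Complex.I * z * x) * u x
        + Complex.exp (Complex.I * z * x) * u' x := by
    intro x; rw [smul_eq_mul]; ring
  have key : ∫ x in Ioi (0:ℝ),
      ((Complex.I * z) • (Complex.exp (Complex.I * z * x) * u x)
        + Complex.exp (Complex.I * z * x) * u' x) = 0 - H 0 := by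
    apply integral_Ioi_of_hasDerivAt_of_tendsto
    · rw [ContinuousWithinAt, h0, show Ici (0:ℝ) = insert 0 (Ioi 0) by rw [Ioi_insert],
        nhdsWithin_insert, tendsto_sup]
      refine ⟨by simpa [h0] using tendsto_pure_nhds H 0, ?_⟩
      apply (aux_tendsto_exp_mul_zero z hlim).congr'
      filter_upwards [self_mem_nhdsWithin] with x hx
      exact (hHeqIoi x hx).symm
    · intro x hx
      have hd : HasDerivAt (fun x : ℝ => Complex.exp (Complex.I * z * x) * u x)
          ((Complex.I * z) • (Complex.exp (Complex.I * z * x) * u x)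
            + Complex.exp (Complex.I * z * x) * u' x) x := by
        have := (aux_exp_deriv z x).mul (hderiv x hx)
        rw [smul_eq_mul]
        exact this.congr_deriv (by ring)
      apply hd.congr_of_eventuallyEq
      filter_upwards [Ioi_mem_nhds hx.out] with y hy
      exact (hHeqIoi y hy)
    · exact (h1.add h2).integrableOn
    · apply Tendsto.congr' _ (aux_tendsto_zero_exp_mul z hdec atTop
        (by rw [cocompact_eq_atBot_atTop]; exact le_sup_right))
      filter_upwards [Ioi_mem_atTop (0:ℝ)] with x hx
      exact (hHeqIoi x hx).symm
  rw [h0, integral_add h1.integrableOn h2.integrableOn, integral_smul] at key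
  rw [smul_eq_mul] at key
  linear_combination key

-- integration by parts on (-∞,0]
lemma aux_ibp_Iic (z : ℝ) (u u' : ℝ → ℂ) (M : ℂ)
    (hderiv : ∀ x ∈ Iio (0:ℝ), HasDerivAt u (u' x) x)
    (hu : Integrable u) (hu' : Integrable u')
    (hlim : Tendsto u (nhdsWithin 0 (Iio 0)) (nhds M))
    (hdec : Tendsto u (cocompact ℝ) (nhds 0)) :
    ∫ x in Iic (0:ℝ), Complex.exp (Complex.I * z * x) * u' x
      = M - Complex.I * z * ∫ x in Iic (0:ℝ), Complex.exp (Complex.I * z * x) * u x := by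
  set H : ℝ → ℂ := fun x => if x < 0 then Complex.exp (Complex.I * z * x) * u x else M
    with hH
  have hHeqIio : ∀ x ∈ Iio (0:ℝ), H x = Complex.exp (Complex.I * z * x) * u x := by
    intro x hx; rw [hH]; simp only [if_pos hx.out]
  have h0 : H 0 = M := by rw [hH]; simp
  have h1 : Integrable (fun x : ℝ => (Complex.I * z) • (Complex.exp (Complex.I * z * x) * u x)) :=
    ((aux_integrable_exp_mul z hu).smul (Complex.I * z)).congr (by filter_upwards with x; rfl)
  have h2 := aux_integrable_exp_mul z hu'
  have key : ∫ x in Iic (0:ℝ),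
      ((Complex.I * z) • (Complex.exp (Complex.I * z * x) * u x)
        + Complex.exp (Complex.I * z * x) * u' x) = H 0 - 0 := by
    apply integral_Iic_of_hasDerivAt_of_tendsto
    · rw [ContinuousWithinAt, h0, show Iic (0:ℝ) = insert 0 (Iio 0) by rw [Iio_insert],
        nhdsWithin_insert, tendsto_sup]
      refine ⟨by simpa [h0] using tendsto_pure_nhds H 0, ?_⟩
      apply (aux_tendsto_exp_mul_zero z hlim).congr'
      filter_upwards [self_mem_nhdsWithin] with x hx
      exact (hHeqIio x hx).symm
    · intro x hx
      have hd : HasDerivAt (fun x : ℝ => Complex.exp (Complex.I * z * x) * u x)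
          ((Complex.I * z) • (Complex.exp (Complex.I * z * x) * u x)
            + Complex.exp (Complex.I * z * x) * u' x) x := by
        have := (aux_exp_deriv z x).mul (hderiv x hx)
        rw [smul_eq_mul]
        exact this.congr_deriv (by ring)
      apply hd.congr_of_eventuallyEq
      filter_upwards [Iio_mem_nhds hx.out] with y hy
      exact (hHeqIio y hy)
    · exact (h1.add h2).integrableOn
    · apply Tendsto.congr' _ (aux_tendsto_zero_exp_mul z hdec atBot
        (by rw [cocompact_eq_atBot_atTop]; exact le_sup_left))
      filter_upwards [Iio_mem_atBot (0:ℝ)] with x hx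
      exact (hHeqIio x hx).symm
  rw [h0, integral_add h1.integrableOn h2.integrableOn, integral_smul] at key
  rw [smul_eq_mul] at key
  linear_combination key


lemma aux_cocompact_Z {p : ℝ → Prop} (h : ∀ᶠ z in cocompact ℝ, p z) :
    ∃ Z : ℝ, 0 < Z ∧ ∀ z : ℝ, Z ≤ |z| → p z := by
  rw [cocompact_eq_atBot_atTop, eventually_sup, eventually_atBot, eventually_atTop] at h
  obtain ⟨⟨A, hA⟩, B, hB⟩ := h
  refine ⟨max (max (|A| + 1) (|B| + 1)) 1, lt_of_lt_of_le zero_lt_one (le_max_right _ _), ?_⟩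
  intro z hz
  rcases le_or_gt 0 z with hz0 | hz0
  · apply hB
    have : |B| + 1 ≤ |z| := le_trans (le_trans (le_max_right _ _) (le_max_left _ _)) hz
    rw [_root_.abs_of_nonneg hz0] at this
    linarith [le_abs_self B]
  · apply hA
    have : |A| + 1 ≤ |z| := le_trans (le_trans (le_max_left _ _) (le_max_left _ _)) hz
    rw [_root_.abs_of_neg hz0] at this
    linarith [neg_abs_le A]

lemma aux_poly_lower (Q : Polynomial ℂ) (hQ : Q.coeff 0 ≠ 0) :
    ∃ c : ℝ, 0 < c ∧ ∀ᶠ z : ℝ in cocompact ℝ,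
      c ≤ ‖Q.eval (Complex.I * z)‖ := by
  rcases lt_or_ge 0 Q.degree with hdeg | hdeg
  · refine ⟨1, zero_lt_one, ?_⟩
    have hz : Tendsto (fun z : ℝ => ‖(Complex.I * z : ℂ)‖) (cocompact ℝ) atTop := by
      have : ∀ z : ℝ, ‖(Complex.I * z : ℂ)‖ = ‖z‖ := by
        intro z; rw [norm_mul, Complex.norm_I, one_mul, Complex.norm_real]
      simp_rw [this]
      exact tendsto_norm_cocompact_atTop
    have := Polynomial.tendsto_norm_atTop Q hdeg hz
    exact this.eventually_ge_atTop 1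
  · refine ⟨‖Q.coeff 0‖, by simpa using hQ, ?_⟩
    have hQC : Q = Polynomial.C (Q.coeff 0) := Polynomial.eq_C_of_degree_le_zero hdeg
    filter_upwards with z
    rw [hQC]
    simp

theorem stmt_16 (f : ℝ → ℝ) (J : ℕ)
    (hsmooth : ContDiffOn ℝ (⊤ : ℕ∞) f {(0:ℝ)}ᶜ)
    (hint : ∀ j ≤ J + 2, Integrable (iteratedDerivWithin j f {(0:ℝ)}ᶜ))
    (hdecay : ∀ j ≤ J + 1,
      Tendsto (iteratedDerivWithin j f {(0:ℝ)}ᶜ) (cocompact ℝ) (nhds 0))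
    (Lplus Lminus : ℝ)
    (hplus : Tendsto (iteratedDerivWithin (J + 1) f {(0:ℝ)}ᶜ)
      (nhdsWithin 0 (Set.Ioi 0)) (nhds Lplus))
    (hminus : Tendsto (iteratedDerivWithin (J + 1) f {(0:ℝ)}ᶜ)
      (nhdsWithin 0 (Set.Iio 0)) (nhds Lminus))
    (hjump : Lplus ≠ Lminus) :
    ∃ c : ℝ, 0 < c ∧ ∃ Z : ℝ, 0 < Z ∧ ∀ z : ℝ, Z ≤ |z| →
      c / |z| ^ (J + 2) ≤
        ‖∫ x : ℝ, Complex.exp (Complex.I * z * x) * (f x : ℂ)‖ := by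
  have hsopen : IsOpen ({(0:ℝ)}ᶜ) := isOpen_compl_singleton
  have hsud : UniqueDiffOn ℝ ({(0:ℝ)}ᶜ) := hsopen.uniqueDiffOn
  set G : ℕ → ℝ → ℂ := fun j x => ((iteratedDerivWithin j f {(0:ℝ)}ᶜ x : ℝ) : ℂ) with hGdef
  -- derivative fact
  have hDeriv : ∀ (j : ℕ) (x : ℝ), x ≠ 0 → HasDerivAt (G j) (G (j+1) x) x := by
    intro j x hx
    have hxs : x ∈ ({(0:ℝ)}ᶜ : Set ℝ) := hx
    have hdiff : DifferentiableWithinAt ℝ (iteratedDerivWithin j f {(0:ℝ)}ᶜ) {(0:ℝ)}ᶜ x :=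
      (hsmooth.differentiableOn_iteratedDerivWithin
        (by exact_mod_cast ENat.coe_lt_top j) hsud) x hxs
    have h3 : HasDerivAt (iteratedDerivWithin j f {(0:ℝ)}ᶜ)
        (derivWithin (iteratedDerivWithin j f {(0:ℝ)}ᶜ) {(0:ℝ)}ᶜ x) x :=
      hdiff.hasDerivWithinAt.hasDerivAt (hsopen.mem_nhds hxs)
    have h4 : iteratedDerivWithin (j+1) f {(0:ℝ)}ᶜ x
        = derivWithin (iteratedDerivWithin j f {(0:ℝ)}ᶜ) {(0:ℝ)}ᶜ x :=
      congrFun iteratedDerivWithin_succ x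
    rw [← h4] at h3
    exact h3.ofReal_comp
  have hGint : ∀ j, j ≤ J + 2 → Integrable (G j) := fun j hj => (hint j hj).ofReal
  have hGdec : ∀ j, j ≤ J + 1 → Tendsto (G j) (cocompact ℝ) (nhds 0) := by
    intro j hj
    have := (Complex.continuous_ofReal.tendsto 0).comp (hdecay j hj)
    simpa [Function.comp_def] using this
  -- one-sided limits
  have hexA : ∀ j : ℕ, ∃ L : ℂ, j ≤ J + 1 → Tendsto (G j) (nhdsWithin 0 (Ioi 0)) (nhds L) := by
    intro j
    by_cases hj : j ≤ J + 1
    · obtain ⟨L, hL⟩ := aux_right_limit (G j) (G (j+1))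
        (fun x hx => hDeriv j x (ne_of_gt hx.out))
        (hGint (j+1) (by omega)).integrableOn
      exact ⟨L, fun _ => hL⟩
    · exact ⟨0, fun h => absurd h hj⟩
  have hexB : ∀ j : ℕ, ∃ L : ℂ, j ≤ J + 1 → Tendsto (G j) (nhdsWithin 0 (Iio 0)) (nhds L) := by
    intro j
    by_cases hj : j ≤ J + 1
    · obtain ⟨L, hL⟩ := aux_left_limit (G j) (G (j+1))
        (fun x hx => hDeriv j x (ne_of_lt hx.out))
        (hGint (j+1) (by omega))
      exact ⟨L, fun _ => hL⟩
    · exact ⟨0, fun h => absurd h hj⟩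
  choose a ha using hexA
  choose b hb using hexB
  set S : ℕ → ℝ → ℂ := fun j z => ∫ x : ℝ, Complex.exp (Complex.I * z * x) * G j x with hSdef
  -- recursion
  have hsplit : ∀ (j : ℕ), j ≤ J + 2 → ∀ z : ℝ,
      S j z = (∫ x in Iic (0:ℝ), Complex.exp (Complex.I * z * x) * G j x)
        + ∫ x in Ioi (0:ℝ), Complex.exp (Complex.I * z * x) * G j x := by
    intro j hj z
    rw [hSdef]
    have := (integral_add_compl (s := Iic (0:ℝ)) measurableSet_Iic
      (aux_integrable_exp_mul z (hGint j hj))).symm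
    rwa [compl_Iic] at this
  have hrec : ∀ (j : ℕ), j ≤ J + 1 → ∀ z : ℝ,
      S (j+1) z = (b j - a j) - Complex.I * z * S j z := by
    intro j hj z
    have e1 := aux_ibp_Iic z (G j) (G (j+1)) (b j)
      (fun x hx => hDeriv j x (ne_of_lt hx.out))
      (hGint j (by omega)) (hGint (j+1) (by omega)) (hb j hj) (hGdec j hj)
    have e2 := aux_ibp_Ioi z (G j) (G (j+1)) (a j)
      (fun x hx => hDeriv j x (ne_of_gt hx.out))
      (hGint j (by omega)) (hGint (j+1) (by omega)) (ha j hj) (hGdec j hj)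
    have e3 := hsplit (j+1) (by omega) z
    have e4 := hsplit j (by omega) z
    rw [e1, e2] at e3
    rw [e3, e4]
    ring
  -- expansion
  have hexp : ∀ z : ℝ, ∀ k : ℕ, k ≤ J + 2 →
      (Complex.I * z)^k * S 0 z
        = (∑ j ∈ Finset.range k, (-1:ℂ)^j * (b j - a j) * (Complex.I * z)^(k-1-j))
          + (-1:ℂ)^k * S k z := by
    intro z k
    induction k with
    | zero => intro _; simp
    | succ k ih =>
      intro hk
      have h1 := ih (by omega)
      have h2 := hrec k (by omega) z
      rw [Finset.sum_range_succ]
      have e1 : ∀ j ∈ Finset.range k,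
          (-1:ℂ)^j * (b j - a j) * (Complex.I * z)^(k-j)
            = (Complex.I * z) * ((-1:ℂ)^j * (b j - a j) * (Complex.I * z)^(k-1-j)) := by
        intro j hj
        rw [Finset.mem_range] at hj
        rw [show k - j = (k-1-j)+1 by omega, pow_succ]
        ring
      have e2 : ∀ j ∈ Finset.range k,
          (-1:ℂ)^j * (b j - a j) * (Complex.I * z)^(k+1-1-j)
            = (-1:ℂ)^j * (b j - a j) * (Complex.I * z)^(k-j) := by
        intro j hj
        rw [Finset.mem_range] at hj
        rw [show k+1-1-j = k-j by omega]
      rw [Finset.sum_congr rfl e2, Finset.sum_congr rfl e1, ← Finset.mul_sum]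
      rw [show k + 1 - 1 - k = 0 by omega, pow_zero, pow_succ, pow_succ]
      linear_combination (Complex.I * z) * h1 + ((-1:ℂ))^k * h2
  -- the polynomial
  set Q : Polynomial ℂ := ∑ j ∈ Finset.range (J+2),
    Polynomial.C ((-1:ℂ)^j * (b j - a j)) * Polynomial.X^(J+1-j) with hQdef
  have hQeval : ∀ z : ℝ, Q.eval (Complex.I * z)
      = ∑ j ∈ Finset.range (J+2), (-1:ℂ)^j * (b j - a j) * (Complex.I * z)^(J+1-j) := by
    intro z
    rw [hQdef, Polynomial.eval_finset_sum]
    simp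
  have haJ : a (J+1) = ((Lplus : ℝ) : ℂ) := by
    have h1 := ha (J+1) le_rfl
    have h2 : Tendsto (G (J+1)) (nhdsWithin 0 (Ioi 0)) (nhds ((Lplus : ℝ) : ℂ)) := by
      have := (Complex.continuous_ofReal.tendsto Lplus).comp hplus
      simpa [Function.comp_def, hGdef] using this
    exact tendsto_nhds_unique h1 h2
  have hbJ : b (J+1) = ((Lminus : ℝ) : ℂ) := by
    have h1 := hb (J+1) le_rfl
    have h2 : Tendsto (G (J+1)) (nhdsWithin 0 (Iio 0)) (nhds ((Lminus : ℝ) : ℂ)) := by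
      have := (Complex.continuous_ofReal.tendsto Lminus).comp hminus
      simpa [Function.comp_def, hGdef] using this
    exact tendsto_nhds_unique h1 h2
  have hQ0 : Q.coeff 0 ≠ 0 := by
    have : Q.coeff 0 = (-1:ℂ)^(J+1) * (b (J+1) - a (J+1)) := by
      rw [hQdef, Polynomial.finset_sum_coeff]
      rw [Finset.sum_eq_single (J+1)]
      · rw [Polynomial.coeff_C_mul, Polynomial.coeff_X_pow]
        simp [show J + 1 - (J+1) = 0 by omega]
      · intro j hj hne
        rw [Finset.mem_range] at hj
        rw [Polynomial.coeff_C_mul, Polynomial.coeff_X_pow]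
        have : J + 1 - j ≠ 0 := by omega
        simp [Ne.symm this]
      · intro h
        exact absurd (Finset.mem_range.mpr (by omega)) h
    rw [this, haJ, hbJ]
    apply mul_ne_zero (pow_ne_zero _ (by norm_num))
    rw [sub_ne_zero]
    exact_mod_cast fun h => hjump (by exact_mod_cast h.symm)
  obtain ⟨c₀, hc₀, hev1⟩ := aux_poly_lower Q hQ0
  have hRL : Tendsto (S (J+2)) (cocompact ℝ) (nhds 0) := aux_RL (G (J+2))
  have hev2 : ∀ᶠ z : ℝ in cocompact ℝ, ‖S (J+2) z‖ < c₀ / 2 :=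
    (tendsto_zero_iff_norm_tendsto_zero.mp hRL).eventually_lt_const (half_pos hc₀)
  obtain ⟨Z, hZpos, hZ⟩ := aux_cocompact_Z (hev1.and hev2)
  refine ⟨c₀ / 2, half_pos hc₀, Z, hZpos, ?_⟩
  intro z hz
  obtain ⟨h1, h2⟩ := hZ z hz
  have hzpos : (0:ℝ) < |z| := lt_of_lt_of_le hZpos hz
  have hfin := hexp z (J+2) le_rfl
  rw [show (J+2) - 1 = J + 1 by omega] at hfin
  rw [← hQeval z] at hfin
  -- norm bound
  have hnorm1 : ‖(Complex.I * z : ℂ)^(J+2)‖ = |z|^(J+2) := by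
    rw [norm_pow, norm_mul, Complex.norm_I, one_mul, Complex.norm_real, Real.norm_eq_abs]
  have hnorm2 : ‖(-1:ℂ)^(J+2) * S (J+2) z‖ = ‖S (J+2) z‖ := by
    rw [norm_mul, norm_pow, norm_neg, norm_one, one_pow, one_mul]
  have hlow : c₀ / 2 ≤ ‖(Complex.I * z : ℂ)^(J+2) * S 0 z‖ := by
    rw [hfin]
    have h3 : ‖Q.eval (Complex.I * z)‖
        ≤ ‖Q.eval (Complex.I * z) + (-1:ℂ)^(J+2) * S (J+2) z‖
          + ‖(-1:ℂ)^(J+2) * S (J+2) z‖ := by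
      have := norm_add_le (Q.eval (Complex.I * z) + (-1:ℂ)^(J+2) * S (J+2) z)
        (-((-1:ℂ)^(J+2) * S (J+2) z))
      simpa using this
    rw [hnorm2] at h3
    linarith
  have hS0 : S 0 z = ∫ x : ℝ, Complex.exp (Complex.I * z * x) * (f x : ℂ) := by
    rw [hSdef]
    simp only [hGdef, iteratedDerivWithin_zero]
  rw [norm_mul, hnorm1] at hlow
  rw [← hS0]
  rw [div_le_iff₀ (by positivity)]
  calc c₀ / 2 ≤ |z|^(J+2) * ‖S 0 z‖ := hlow
    _ = ‖S 0 z‖ * |z|^(J+2) := by ring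
end
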